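/- In the setting of paths with unique endpoints (distinct color classes X=C₀,C₁,…,C_t,C_{t+1}=Y with internal classes of degree-2 vertices, each x ∈ X having exactly one neighbor in C₁, and no edges between X and Y), let G' be obtained by deleting C₁ ∪ ⋯ ∪ C_t and adding an edge {x,y} for every unique path (x,c₁,…,c_t,y). Then the restriction map Aut(G,π) → Aut(G',π|_{V'}) is a well-defined surjective group homomorphism (symmetry preservation and symmetry lifting hold). -/

import Mathlib

namespace Sassy

/-- A coloring is equitable if vertices of the same color have the same number of
neighbors in every color class. -/
def Equitable {V C : Type*} (G : SimpleGraph V) (π : V → C) : Prop :=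
  ∀ v w, π v = π w → ∀ c : C,
    {u | G.Adj v u ∧ π u = c}.ncard = {u | G.Adj w u ∧ π u = c}.ncard

/-- `φ` is a color-preserving automorphism of the colored graph `(G, π)`. -/
def IsAut {V C : Type*} (G : SimpleGraph V) (π : V → C) (φ : Equiv.Perm V) : Prop :=
  (∀ v w, G.Adj (φ v) (φ w) ↔ G.Adj v w) ∧ ∀ v, π (φ v) = π v

/-- The automorphism group of a colored graph, as a subgroup of `Equiv.Perm V`. -/
def Aut {V C : Type*} (G : SimpleGraph V) (π : V → C) : Subgroup (Equiv.Perm V) where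
  carrier := {φ | IsAut G π φ}
  one_mem' := ⟨fun _ _ => Iff.rfl, fun _ => rfl⟩
  mul_mem' := by
    rintro a b ⟨ha1, ha2⟩ ⟨hb1, hb2⟩
    refine ⟨fun v w => ?_, fun v => ?_⟩
    · simpa [Equiv.Perm.mul_apply] using (ha1 (b v) (b w)).trans (hb1 v w)
    · simp [Equiv.Perm.mul_apply, ha2, hb2]
  inv_mem' := by
    rintro a ⟨ha1, ha2⟩
    refine ⟨fun v w => ?_, fun v => ?_⟩
    · conv_rhs => rw [← Equiv.apply_symm_apply a v, ← Equiv.apply_symm_apply a w]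
      exact (ha1 _ _).symm
    · conv_rhs => rw [← Equiv.apply_symm_apply a v]
      exact (ha2 _).symm

end Sassy

namespace Sassy

/-- A path `(x, c₁, …, c_t, y)` through the color classes `c 0, c 1, …, c (t+1)`,
encoded as a function `w : Fin (t+2) → V`. -/
def IsUPath {V C : Type*} (G : SimpleGraph V) (π : V → C) (c : ℕ → C) (t : ℕ)
    (x : V) (w : Fin (t + 2) → V) : Prop :=
  w ⟨0, by omega⟩ = x ∧ (∀ i : Fin (t + 2), π (w i) = c i.1) ∧
    ∀ i : ℕ, (h : i + 1 < t + 2) → G.Adj (w ⟨i, by omega⟩) (w ⟨i + 1, h⟩)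

end Sassy

/-!
A vertex of colour `c k` with `1 ≤ k ≤ t` lies at position `k` of the forward path from a unique
`x` of colour `c 0`, and that forward path is the only coloured path leaving `x`; so the deleted
vertices are indexed by pairs `(x, k)`. An automorphism of `G` maps coloured paths to coloured
paths, hence its restriction preserves `G'`. Conversely, since `G` has no edges between the colours
`c 0` and `c (t + 1)`, an automorphism `ψ` of `G'` sends the endpoint of the path from `x` to the
endpoint of the path from `ψ x`; sending position `k` of the first path to position `k` of the
second therefore extends `ψ` to an automorphism of `G`.
-/

namespace Sassy

open Equiv

variable {V C : Type*} {G : SimpleGraph V} {π : V → C} {c : ℕ → C} {t : ℕ}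

theorem IsAut.inv {φ : Perm V} (hφ : IsAut G π φ) : IsAut G π φ⁻¹ :=
  (Aut G π).inv_mem hφ

theorem isAut_of_adj_imp {φ : Perm V} (hcol : ∀ v, π (φ v) = π v)
    (hadj : ∀ v w, G.Adj v w → G.Adj (φ v) (φ w))
    (hadj_inv : ∀ v w, G.Adj v w → G.Adj (φ⁻¹ v) (φ⁻¹ w)) : IsAut G π φ :=
  ⟨fun v w => ⟨fun h => by simpa using hadj_inv _ _ h, hadj v w⟩, hcol⟩

structure IsUniqueEndpointPaths (G : SimpleGraph V) (π : V → C) (c : ℕ → C)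
    (t : ℕ) : Prop where
  injOn : Set.InjOn c (Set.Iic (t + 1))
  not_adj : ∀ u v, π u = c 0 → π v = c (t + 1) → ¬ G.Adj u v
  internal : ∀ i, 1 ≤ i → i ≤ t → ∀ v, π v = c i →
    (G.neighborSet v).ncard = 2 ∧ (∃ u, G.Adj v u ∧ π u = c (i - 1)) ∧
      (∃ u, G.Adj v u ∧ π u = c (i + 1))
  existsUnique_first : ∀ x, π x = c 0 → ∃! u, G.Adj x u ∧ π u = c 1

-- The vertex set `V' = V ∖ (C₁ ∪ ⋯ ∪ C_t)` of the reduced graph.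
abbrev reducedVerts (π : V → C) (c : ℕ → C) (t : ℕ) : Set V :=
  {v | ∀ i, 1 ≤ i → i ≤ t → π v ≠ c i}

namespace IsUniqueEndpointPaths

theorem index_eq (h : IsUniqueEndpointPaths G π c t) {v : V} {i j : ℕ} (hi : i ≤ t + 1)
    (hj : j ≤ t + 1) (hvi : π v = c i) (hvj : π v = c j) : i = j :=
  h.injOn hi hj (hvi.symm.trans hvj)

theorem mem_reducedVerts (h : IsUniqueEndpointPaths G π c t) {v : V} {i : ℕ}
    (hi : i = 0 ∨ i = t + 1) (hv : π v = c i) : v ∈ reducedVerts π c t := by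
  intro j hj1 hjt hvj
  have := h.index_eq (by omega) (by omega) hv hvj
  omega

theorem neighborSet_eq_pair (h : IsUniqueEndpointPaths G π c t) {i : ℕ} (hi : i < t) {v : V}
    (hv : π v = c (i + 1)) :
    ∃ a b, π a = c i ∧ π b = c (i + 2) ∧ G.neighborSet v = {a, b} := by
  obtain ⟨hcard, ⟨a, ha, hπa⟩, ⟨b, hb, hπb⟩⟩ := h.internal (i + 1) (by omega) hi v hv
  have hab : a ≠ b := by
    rintro rfl
    have := h.index_eq (v := a) (by omega) (by omega) hπa hπb
    omega
  refine ⟨a, b, hπa, hπb, (Set.eq_of_subset_of_ncard_le ?_ ?_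
    (Set.finite_of_ncard_ne_zero (by omega))).symm⟩
  · exact Set.insert_subset ha (Set.singleton_subset_iff.mpr hb)
  · rw [hcard, Set.ncard_pair hab]

theorem color_of_adj (h : IsUniqueEndpointPaths G π c t) {i : ℕ} (hi : i < t) {u v : V}
    (hv : π v = c (i + 1)) (huv : G.Adj v u) : π u = c i ∨ π u = c (i + 2) := by
  obtain ⟨a, b, hπa, hπb, hN⟩ := h.neighborSet_eq_pair hi hv
  have hu : u ∈ G.neighborSet v := huv
  rw [hN] at hu
  rcases hu with rfl | rfl
  exacts [Or.inl hπa, Or.inr hπb]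

theorem existsUnique_succ (h : IsUniqueEndpointPaths G π c t) {i : ℕ} (hi : i ≤ t) {v : V}
    (hv : π v = c i) : ∃! u, G.Adj v u ∧ π u = c (i + 1) := by
  cases i with
  | zero => exact h.existsUnique_first v hv
  | succ i =>
    obtain ⟨a, b, hπa, hπb, hN⟩ := h.neighborSet_eq_pair hi hv
    refine ⟨b, ⟨show b ∈ G.neighborSet v by simp [hN], hπb⟩, ?_⟩
    rintro u ⟨hu, hπu⟩
    rw [← SimpleGraph.mem_neighborSet, hN] at hu
    rcases hu with rfl | rfl
    · have := h.index_eq (v := u) (by omega) (by omega) hπa hπu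
      omega
    · rfl

theorem existsUnique_pred (h : IsUniqueEndpointPaths G π c t) {i : ℕ} (hi : i < t) {v : V}
    (hv : π v = c (i + 1)) : ∃! u, G.Adj v u ∧ π u = c i := by
  obtain ⟨a, b, hπa, hπb, hN⟩ := h.neighborSet_eq_pair hi hv
  refine ⟨a, ⟨show a ∈ G.neighborSet v by simp [hN], hπa⟩, ?_⟩
  rintro u ⟨hu, hπu⟩
  rw [← SimpleGraph.mem_neighborSet, hN] at hu
  rcases hu with rfl | rfl
  · rfl
  · have := h.index_eq (v := u) (by omega) (by omega) hπb hπu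
    omega

end IsUniqueEndpointPaths

-- Junk value `v` when there is no such neighbour.
open Classical in
noncomputable def succNbr (G : SimpleGraph V) (π : V → C) (c : ℕ → C) (i : ℕ)
    (v : V) : V :=
  if h : ∃ u, G.Adj v u ∧ π u = c (i + 1) then h.choose else v

theorem succNbr_spec {i : ℕ} {v : V} (h : ∃ u, G.Adj v u ∧ π u = c (i + 1)) :
    G.Adj v (succNbr G π c i v) ∧ π (succNbr G π c i v) = c (i + 1) := by
  rw [succNbr, dif_pos h]
  exact h.choose_spec

noncomputable def fwdPath (G : SimpleGraph V) (π : V → C) (c : ℕ → C) (x : V) : ℕ → V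
  | 0 => x
  | i + 1 => succNbr G π c i (fwdPath G π c x i)

namespace IsUniqueEndpointPaths

variable {x : V} {i : ℕ}

theorem color_fwdPath (h : IsUniqueEndpointPaths G π c t) (hx : π x = c 0) (hi : i ≤ t + 1) :
    π (fwdPath G π c x i) = c i := by
  induction i with
  | zero => exact hx
  | succ i ih =>
    exact (succNbr_spec (h.existsUnique_succ (by omega) (ih (by omega))).exists).2

theorem adj_fwdPath (h : IsUniqueEndpointPaths G π c t) (hx : π x = c 0) (hi : i ≤ t) :
    G.Adj (fwdPath G π c x i) (fwdPath G π c x (i + 1)) :=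
  (succNbr_spec (h.existsUnique_succ hi (h.color_fwdPath hx (by omega))).exists).1

theorem eq_fwdPath_succ (h : IsUniqueEndpointPaths G π c t) (hx : π x = c 0) (hi : i ≤ t)
    {u : V} (hu : G.Adj (fwdPath G π c x i) u) (hπu : π u = c (i + 1)) :
    u = fwdPath G π c x (i + 1) :=
  (h.existsUnique_succ hi (h.color_fwdPath hx (by omega))).unique ⟨hu, hπu⟩
    ⟨h.adj_fwdPath hx hi, h.color_fwdPath hx (by omega)⟩

theorem eq_fwdPath_pred (h : IsUniqueEndpointPaths G π c t) (hx : π x = c 0) (hi : i < t)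
    {u : V} (hu : G.Adj (fwdPath G π c x (i + 1)) u) (hπu : π u = c i) :
    u = fwdPath G π c x i :=
  (h.existsUnique_pred hi (h.color_fwdPath hx (by omega))).unique ⟨hu, hπu⟩
    ⟨(h.adj_fwdPath hx (by omega)).symm, h.color_fwdPath hx (by omega)⟩

theorem eq_or_eq_of_adj_fwdPath (h : IsUniqueEndpointPaths G π c t) (hx : π x = c 0)
    (hi : i < t) {u : V} (hu : G.Adj (fwdPath G π c x (i + 1)) u) :
    u = fwdPath G π c x i ∨ u = fwdPath G π c x (i + 2) := by
  rcases h.color_of_adj hi (h.color_fwdPath hx (by omega)) hu with hπu | hπu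
  · exact Or.inl (h.eq_fwdPath_pred hx hi hu hπu)
  · exact Or.inr (h.eq_fwdPath_succ hx (by omega) hu hπu)

theorem fwdPath_inj (h : IsUniqueEndpointPaths G π c t) {y : V} (hx : π x = c 0)
    (hy : π y = c 0) (hi : i ≤ t) (hxy : fwdPath G π c x i = fwdPath G π c y i) : x = y := by
  induction i with
  | zero => exact hxy
  | succ i ih =>
    refine ih (by omega) (h.eq_fwdPath_pred hx (by omega) ?_ (h.color_fwdPath hy (by omega))).symm
    rw [hxy]
    exact (h.adj_fwdPath hy (by omega)).symm

theorem exists_fwdPath_eq (h : IsUniqueEndpointPaths G π c t) {v : V} (hi : i ≤ t)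
    (hv : π v = c i) : ∃ x, π x = c 0 ∧ fwdPath G π c x i = v := by
  induction i generalizing v with
  | zero => exact ⟨v, hv, rfl⟩
  | succ i ih =>
    obtain ⟨u, ⟨hvu, hπu⟩, -⟩ := h.existsUnique_pred (by omega) hv
    obtain ⟨x, hx, rfl⟩ := ih (by omega) hπu
    exact ⟨x, hx, (h.eq_fwdPath_succ hx (by omega) hvu.symm hv).symm⟩

end IsUniqueEndpointPaths

def IsUPathBetween (G : SimpleGraph V) (π : V → C) (c : ℕ → C) (t : ℕ) (x y : V) : Prop :=
  ∃ w : Fin (t + 2) → V, IsUPath G π c t x w ∧ w (Fin.last (t + 1)) = y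

namespace IsUPathBetween

variable {x y : V}

theorem color_left (hxy : IsUPathBetween G π c t x y) : π x = c 0 := by
  obtain ⟨w, ⟨rfl, hcol, -⟩, -⟩ := hxy
  exact hcol 0

theorem color_right (hxy : IsUPathBetween G π c t x y) : π y = c (t + 1) := by
  obtain ⟨w, ⟨-, hcol, -⟩, rfl⟩ := hxy
  exact hcol _

theorem map {φ : Equiv.Perm V} (hφ : IsAut G π φ) (hxy : IsUPathBetween G π c t x y) :
    IsUPathBetween G π c t (φ x) (φ y) := by
  obtain ⟨w, ⟨rfl, hcol, hadj⟩, rfl⟩ := hxy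
  exact ⟨φ ∘ w, ⟨rfl, fun i => (hφ.2 _).trans (hcol i),
    fun i hi => (hφ.1 _ _).mpr (hadj i hi)⟩, rfl⟩

theorem eq_fwdPath (h : IsUniqueEndpointPaths G π c t) (hxy : IsUPathBetween G π c t x y) :
    y = fwdPath G π c x (t + 1) := by
  obtain ⟨w, ⟨rfl, hcol, hadj⟩, rfl⟩ := hxy
  suffices ∀ i (hi : i < t + 2), w ⟨i, hi⟩ = fwdPath G π c (w 0) i from this _ _
  intro i hi
  induction i with
  | zero => rfl
  | succ i ih =>
    have hstep := hadj i hi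
    rw [ih (by omega)] at hstep
    exact h.eq_fwdPath_succ (hcol 0) (by omega) hstep (hcol _)

end IsUPathBetween

theorem IsUniqueEndpointPaths.isUPathBetween_fwdPath (h : IsUniqueEndpointPaths G π c t)
    {x : V} (hx : π x = c 0) : IsUPathBetween G π c t x (fwdPath G π c x (t + 1)) :=
  ⟨fun i => fwdPath G π c x i, ⟨rfl, fun i => h.color_fwdPath hx (Nat.le_of_lt_succ i.isLt),
    fun i hi => h.adj_fwdPath hx (i := i) (by omega)⟩, rfl⟩

theorem mem_reducedVerts_iff {φ : Perm V} (hφ : ∀ v, π (φ v) = π v) (v : V) :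
    φ v ∈ reducedVerts π c t ↔ v ∈ reducedVerts π c t := by
  simp only [Set.mem_ofPred_eq, hφ]

def IsReduction (G : SimpleGraph V) (π : V → C) (c : ℕ → C) (t : ℕ)
    (G' : SimpleGraph (reducedVerts π c t)) : Prop :=
  ∀ u v, G'.Adj u v ↔
    G.Adj u.1 v.1 ∨ IsUPathBetween G π c t u v ∨ IsUPathBetween G π c t v u

variable {G' : SimpleGraph (reducedVerts π c t)}

namespace IsReduction

theorem adj_subtypePerm (hG' : IsReduction G π c t G') {φ : Perm V} (hφ : IsAut G π φ)
    {u v : reducedVerts π c t} (huv : G'.Adj u v) :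
    G'.Adj (φ.subtypePerm (mem_reducedVerts_iff hφ.2) u)
      (φ.subtypePerm (mem_reducedVerts_iff hφ.2) v) := by
  rw [hG'] at huv ⊢
  exact huv.imp (hφ.1 _ _).mpr (Or.imp (IsUPathBetween.map hφ) (IsUPathBetween.map hφ))

theorem isAut_subtypePerm (hG' : IsReduction G π c t G') {φ : Perm V} (hφ : IsAut G π φ) :
    IsAut G' (fun v => π v.1) (φ.subtypePerm (mem_reducedVerts_iff hφ.2)) :=
  isAut_of_adj_imp (fun v => hφ.2 v) (fun _ _ => hG'.adj_subtypePerm hφ)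
    (fun _ _ => hG'.adj_subtypePerm hφ.inv)

end IsReduction

def restrictAut (hG' : IsReduction G π c t G') : Aut G π →* Aut G' (fun v => π v.1) where
  toFun φ := ⟨φ.1.subtypePerm (mem_reducedVerts_iff φ.2.2), hG'.isAut_subtypePerm φ.2⟩
  map_one' := rfl
  map_mul' _ _ := rfl

-- A deleted vertex is written as position `k` of the path from `x`, and sent to position `k` of
-- the path from `ψ x`; the remaining vertices are moved by `ψ`.
open Classical in
noncomputable def liftPerm (G : SimpleGraph V) (π : V → C) (c : ℕ → C) (t : ℕ)
    (ψ : Perm (reducedVerts π c t)) (v : V) : V :=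
  if h : ∃ p : V × ℕ,
      π p.1 = c 0 ∧ 1 ≤ p.2 ∧ p.2 ≤ t ∧ fwdPath G π c p.1 p.2 = v then
    fwdPath G π c (Perm.ofSubtype ψ h.choose.1) h.choose.2
  else Perm.ofSubtype ψ v

namespace IsUniqueEndpointPaths

variable {ψ : Perm (reducedVerts π c t)}

theorem liftPerm_coe (h : IsUniqueEndpointPaths G π c t) (ψ : Perm (reducedVerts π c t))
    (v : reducedVerts π c t) : liftPerm G π c t ψ v = ψ v := by
  classical
  rw [liftPerm, dif_neg, Perm.ofSubtype_apply_coe]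
  rintro ⟨⟨x, k⟩, hx, hk1, hkt, hxk⟩
  exact v.2 k hk1 hkt (hxk ▸ h.color_fwdPath hx (by omega))

theorem mem_reducedVerts_or (h : IsUniqueEndpointPaths G π c t) (v : V) :
    v ∈ reducedVerts π c t ∨
      ∃ x : reducedVerts π c t, π x = c 0 ∧ ∃ k < t, v = fwdPath G π c x (k + 1) := by
  by_cases hv : v ∈ reducedVerts π c t
  · exact Or.inl hv
  · simp only [Set.mem_ofPred_eq, not_forall, not_not] at hv
    obtain ⟨i, hi1, hit, hvi⟩ := hv
    obtain ⟨x, hx, hxv⟩ := h.exists_fwdPath_eq hit hvi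
    refine Or.inr ⟨⟨x, h.mem_reducedVerts (Or.inl rfl) hx⟩, hx, i - 1, by omega, ?_⟩
    rw [Nat.sub_add_cancel hi1, hxv]

theorem adj_apply_of_adj (h : IsUniqueEndpointPaths G π c t) (hG' : IsReduction G π c t G')
    (hψ : IsAut G' (fun v => π v.1) ψ) {u v : reducedVerts π c t} (huv : G.Adj u v) :
    G.Adj (ψ u) (ψ v) := by
  rcases (hG' _ _).mp ((hψ.1 u v).mpr ((hG' u v).mpr (Or.inl huv))) with h' | h' | h'
  · exact h'
  · exact absurd huv (h.not_adj _ _ ((hψ.2 u).symm.trans h'.color_left)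
      ((hψ.2 v).symm.trans h'.color_right))
  · exact absurd huv.symm (h.not_adj _ _ ((hψ.2 v).symm.trans h'.color_left)
      ((hψ.2 u).symm.trans h'.color_right))

theorem apply_eq_fwdPath_last (h : IsUniqueEndpointPaths G π c t) (hG' : IsReduction G π c t G')
    (hψ : IsAut G' (fun v => π v.1) ψ) {x y : reducedVerts π c t} (hx : π x = c 0)
    (hy : (y : V) = fwdPath G π c x (t + 1)) : (ψ y : V) = fwdPath G π c (ψ x) (t + 1) := by
  have hπy : π y = c (t + 1) := hy ▸ h.color_fwdPath hx le_rfl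
  have hxy : G'.Adj x y := (hG' x y).mpr (Or.inr (Or.inl (hy ▸ h.isUPathBetween_fwdPath hx)))
  rcases (hG' _ _).mp ((hψ.1 x y).mpr hxy) with h' | h' | h'
  · exact absurd h' (h.not_adj _ _ ((hψ.2 x).trans hx) ((hψ.2 y).trans hπy))
  · exact h'.eq_fwdPath h
  · have := h.index_eq le_rfl (Nat.zero_le _) ((hψ.2 y).trans hπy) h'.color_left
    omega

theorem liftPerm_fwdPath (h : IsUniqueEndpointPaths G π c t) (hG' : IsReduction G π c t G')
    (hψ : IsAut G' (fun v => π v.1) ψ) {x : reducedVerts π c t} (hx : π x = c 0) {k : ℕ}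
    (hk : k ≤ t + 1) : liftPerm G π c t ψ (fwdPath G π c x k) = fwdPath G π c (ψ x) k := by
  obtain rfl | ⟨hk1, hkt⟩ | rfl : k = 0 ∨ (1 ≤ k ∧ k ≤ t) ∨ k = t + 1 := by omega
  · exact h.liftPerm_coe ψ x
  · have hex : ∃ p : V × ℕ, π p.1 = c 0 ∧ 1 ≤ p.2 ∧ p.2 ≤ t ∧
        fwdPath G π c p.1 p.2 = fwdPath G π c x k := ⟨(x, k), hx, hk1, hkt, rfl⟩
    classical
    rw [liftPerm, dif_pos hex]
    have hspec := hex.choose_spec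
    generalize hex.choose = p at hspec ⊢
    obtain ⟨y, j⟩ := p
    obtain ⟨hy, -, hjt, hyx⟩ := hspec
    obtain rfl : j = k := h.index_eq (by omega) (by omega)
      (hyx ▸ h.color_fwdPath hy (by omega)) (h.color_fwdPath hx (by omega))
    obtain rfl := h.fwdPath_inj hy hx hkt hyx
    exact congrArg (fwdPath G π c · j) (Perm.ofSubtype_apply_coe ψ x)
  · have hend := h.mem_reducedVerts (Or.inr rfl) (h.color_fwdPath hx le_rfl)
    exact (h.liftPerm_coe ψ ⟨_, hend⟩).trans (h.apply_eq_fwdPath_last hG' hψ hx rfl)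

theorem color_liftPerm (h : IsUniqueEndpointPaths G π c t) (hG' : IsReduction G π c t G')
    (hψ : IsAut G' (fun v => π v.1) ψ) (v : V) : π (liftPerm G π c t ψ v) = π v := by
  rcases h.mem_reducedVerts_or v with hv | ⟨x, hx, k, hk, rfl⟩
  · exact (congrArg π (h.liftPerm_coe ψ ⟨v, hv⟩)).trans (hψ.2 _)
  · rw [h.liftPerm_fwdPath hG' hψ hx (by omega), h.color_fwdPath ((hψ.2 x).trans hx) (by omega),
      h.color_fwdPath hx (by omega)]

theorem liftPerm_inv_liftPerm (h : IsUniqueEndpointPaths G π c t) (hG' : IsReduction G π c t G')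
    (hψ : IsAut G' (fun v => π v.1) ψ) (v : V) :
    liftPerm G π c t ψ⁻¹ (liftPerm G π c t ψ v) = v := by
  rcases h.mem_reducedVerts_or v with hv | ⟨x, hx, k, hk, rfl⟩
  · rw [h.liftPerm_coe ψ ⟨v, hv⟩, h.liftPerm_coe, Perm.coe_inv, symm_apply_apply]
  · rw [h.liftPerm_fwdPath hG' hψ hx (by omega),
      h.liftPerm_fwdPath hG' hψ.inv ((hψ.2 x).trans hx) (by omega), Perm.coe_inv,
      symm_apply_apply]

theorem adj_liftPerm_fwdPath (h : IsUniqueEndpointPaths G π c t) (hG' : IsReduction G π c t G')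
    (hψ : IsAut G' (fun v => π v.1) ψ) {x : reducedVerts π c t} (hx : π x = c 0) {k : ℕ}
    (hk : k < t) {u : V} (hu : G.Adj (fwdPath G π c x (k + 1)) u) :
    G.Adj (liftPerm G π c t ψ (fwdPath G π c x (k + 1))) (liftPerm G π c t ψ u) := by
  have hψx : π (ψ x) = c 0 := (hψ.2 x).trans hx
  rcases h.eq_or_eq_of_adj_fwdPath hx hk hu with rfl | rfl
  · rw [h.liftPerm_fwdPath hG' hψ hx (by omega), h.liftPerm_fwdPath hG' hψ hx (by omega)]
    exact (h.adj_fwdPath hψx (by omega)).symm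
  · rw [h.liftPerm_fwdPath hG' hψ hx (by omega), h.liftPerm_fwdPath hG' hψ hx (by omega)]
    exact h.adj_fwdPath hψx (by omega)

theorem adj_liftPerm (h : IsUniqueEndpointPaths G π c t) (hG' : IsReduction G π c t G')
    (hψ : IsAut G' (fun v => π v.1) ψ) {u v : V} (huv : G.Adj u v) :
    G.Adj (liftPerm G π c t ψ u) (liftPerm G π c t ψ v) := by
  rcases h.mem_reducedVerts_or u with hu | ⟨x, hx, k, hk, rfl⟩
  · rcases h.mem_reducedVerts_or v with hv | ⟨y, hy, j, hj, rfl⟩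
    · rw [h.liftPerm_coe ψ ⟨u, hu⟩, h.liftPerm_coe ψ ⟨v, hv⟩]
      exact h.adj_apply_of_adj hG' hψ (u := ⟨u, hu⟩) (v := ⟨v, hv⟩) huv
    · exact (h.adj_liftPerm_fwdPath hG' hψ hy hj huv.symm).symm
  · exact h.adj_liftPerm_fwdPath hG' hψ hx hk huv

noncomputable def liftAut (h : IsUniqueEndpointPaths G π c t) (hG' : IsReduction G π c t G')
    (ψ : Aut G' (fun v => π v.1)) : Aut G π :=
  have hψ : IsAut G' (fun v => π v.1) ψ.1 := ψ.2
  ⟨⟨liftPerm G π c t ψ.1, liftPerm G π c t ψ.1⁻¹, h.liftPerm_inv_liftPerm hG' hψ,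
      fun v => by simpa only [inv_inv] using h.liftPerm_inv_liftPerm hG' hψ.inv v⟩,
    isAut_of_adj_imp (h.color_liftPerm hG' hψ) (fun _ _ => h.adj_liftPerm hG' hψ)
      (fun _ _ => h.adj_liftPerm hG' hψ.inv)⟩

theorem restrictAut_liftAut (h : IsUniqueEndpointPaths G π c t) (hG' : IsReduction G π c t G')
    (ψ : Aut G' (fun v => π v.1)) : restrictAut hG' (h.liftAut hG' ψ) = ψ :=
  Subtype.ext (Equiv.ext fun v => Subtype.ext (h.liftPerm_coe ψ.1 v))

theorem restrictAut_surjective (h : IsUniqueEndpointPaths G π c t)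
    (hG' : IsReduction G π c t G') : Function.Surjective (restrictAut hG') :=
  fun ψ => ⟨h.liftAut hG' ψ, h.restrictAut_liftAut hG' ψ⟩

end IsUniqueEndpointPaths

end Sassy

theorem stmt9_general {V C : Type*} (G : SimpleGraph V) (π : V → C)
    (t : ℕ) (c : ℕ → C)
    (hinj : ∀ i j, i ≤ t + 1 → j ≤ t + 1 → c i = c j → i = j)
    (hXY : ∀ u v, π u = c 0 → π v = c (t + 1) → ¬ G.Adj u v)
    (hdeg2 : ∀ i, 1 ≤ i → i ≤ t → ∀ v, π v = c i →
      (G.neighborSet v).ncard = 2 ∧ (∃ u, G.Adj v u ∧ π u = c (i - 1)) ∧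
        (∃ u, G.Adj v u ∧ π u = c (i + 1)))
    (hX1 : ∀ x, π x = c 0 → ∃! u, G.Adj x u ∧ π u = c 1)
    (G' : SimpleGraph ↥{v : V | ∀ i, 1 ≤ i → i ≤ t → π v ≠ c i})
    (hG' : ∀ u v : ↥{v : V | ∀ i, 1 ≤ i → i ≤ t → π v ≠ c i},
      G'.Adj u v ↔ (G.Adj u.1 v.1 ∨
        (∃ w : Fin (t + 2) → V, Sassy.IsUPath G π c t u.1 w ∧ w (Fin.last (t + 1)) = v.1) ∨
        (∃ w : Fin (t + 2) → V, Sassy.IsUPath G π c t v.1 w ∧ w (Fin.last (t + 1)) = u.1))) :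
    ∃ p : ↥(Sassy.Aut G π) →* ↥(Sassy.Aut G' (fun v => π v.1)),
      (∀ (φ : ↥(Sassy.Aut G π)) (v : ↥{v : V | ∀ i, 1 ≤ i → i ≤ t → π v ≠ c i}),
        ((p φ).1 v).1 = φ.1 v.1) ∧
      Function.Surjective p :=
  have h : Sassy.IsUniqueEndpointPaths G π c t :=
    ⟨fun i hi j hj hij => hinj i j hi hj hij, hXY, hdeg2, hX1⟩
  ⟨Sassy.restrictAut hG', fun _ _ => rfl, h.restrictAut_surjective hG'⟩

/-- Replacing the unique paths from X = c 0 to Y = c (t+1) by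
direct edges: the restriction map from Aut(G,π) to the automorphism group of
the reduced graph G' (deleting C₁ ∪ ⋯ ∪ C_t and adding an edge {x,y} for each
unique path) is a well-defined surjective group homomorphism. -/
theorem stmt9 {V C : Type*} [Fintype V] (G : SimpleGraph V) (π : V → C)
    (hequit : Sassy.Equitable G π) (t : ℕ) (c : ℕ → C)
    (hinj : ∀ i j, i ≤ t + 1 → j ≤ t + 1 → c i = c j → i = j)
    (hXY : ∀ u v, π u = c 0 → π v = c (t + 1) → ¬ G.Adj u v)
    (hdeg2 : ∀ i, 1 ≤ i → i ≤ t → ∀ v, π v = c i →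
      (G.neighborSet v).ncard = 2 ∧ (∃ u, G.Adj v u ∧ π u = c (i - 1)) ∧
        (∃ u, G.Adj v u ∧ π u = c (i + 1)))
    (hX1 : ∀ x, π x = c 0 → ∃! u, G.Adj x u ∧ π u = c 1)
    (G' : SimpleGraph ↥{v : V | ∀ i, 1 ≤ i → i ≤ t → π v ≠ c i})
    (hG' : ∀ u v : ↥{v : V | ∀ i, 1 ≤ i → i ≤ t → π v ≠ c i},
      G'.Adj u v ↔ (G.Adj u.1 v.1 ∨
        (∃ w : Fin (t + 2) → V, Sassy.IsUPath G π c t u.1 w ∧ w (Fin.last (t + 1)) = v.1) ∨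
        (∃ w : Fin (t + 2) → V, Sassy.IsUPath G π c t v.1 w ∧ w (Fin.last (t + 1)) = u.1))) :
    ∃ p : ↥(Sassy.Aut G π) →* ↥(Sassy.Aut G' (fun v => π v.1)),
      (∀ (φ : ↥(Sassy.Aut G π)) (v : ↥{v : V | ∀ i, 1 ≤ i → i ≤ t → π v ≠ c i}),
        ((p φ).1 v).1 = φ.1 v.1) ∧
      Function.Surjective p :=
  stmt9_general G π t c hinj hXY hdeg2 hX1 G' hG'
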